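/- For every overlapping IFS with critical itineraries α and β, there exists a ∈ (0,1) such that π_a(α) = π_a(β), i.e. the power series equation ∑_{n≥0} α_n a^n = ∑_{n≥0} β_n a^n has a solution in (0,1). -/

import Mathlib

open Set Filter Topology

/-- Strict lexicographic order on binary strings. -/
def lexLt (σ ω : ℕ → Bool) : Prop :=
  ∃ k, (∀ j < k, σ j = ω j) ∧ σ k < ω k

/-- Lexicographic order on binary strings. -/
def lexLe (σ ω : ℕ → Bool) : Prop := lexLt σ ω ∨ σ = ω

/-- n-fold shift. -/
def shiftn (n : ℕ) (ω : ℕ → Bool) : ℕ → Bool := fun k => ω (k + n)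

/-- Plus dynamical system: boundary point goes to the 0-branch inverse `g1` side, i.e. `x ≥ q` uses `g1`. -/
noncomputable def Tplus (g0 g1 : ℝ → ℝ) (q : ℝ) (x : ℝ) : ℝ := if x < q then g0 x else g1 x

noncomputable def Tminus (g0 g1 : ℝ → ℝ) (q : ℝ) (x : ℝ) : ℝ := if x ≤ q then g0 x else g1 x

/-- Itinerary under the plus system. -/
noncomputable def tauPlus (g0 g1 : ℝ → ℝ) (q : ℝ) (x : ℝ) : ℕ → Bool :=
  fun n => decide (q ≤ (Tplus g0 g1 q)^[n] x)

/-- Itinerary under the minus system. -/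
noncomputable def tauMinus (g0 g1 : ℝ → ℝ) (q : ℝ) (x : ℝ) : ℕ → Bool :=
  fun n => decide (q < (Tminus g0 g1 q)^[n] x)

/-- Coding map of the uniform IFS with ratio `a`. -/
noncomputable def piU (a : ℝ) (ω : ℕ → Bool) : ℝ := (1 - a) * ∑' k : ℕ, (cond (ω k) (a ^ k) 0)

/-- `wordMap u0 u1 σ k = f_{σ|k} = f_{σ 0} ∘ ⋯ ∘ f_{σ k}`. -/
def wordMap (u0 u1 : ℝ → ℝ) (σ : ℕ → Bool) : ℕ → ℝ → ℝ
  | 0 => cond (σ 0) u1 u0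
  | (k+1) => fun x => wordMap u0 u1 σ k ((cond (σ (k+1)) u1 u0) x)

/-- Coding map of the IFS `(u0, u1)`. -/
noncomputable def piCode (u0 u1 : ℝ → ℝ) (σ : ℕ → Bool) : ℝ :=
  limUnder atTop (fun k => wordMap u0 u1 σ k 0)

/-- `h` is a homeomorphism of `[0,1]` onto itself. -/
def IsIccHomeo (h : ℝ → ℝ) : Prop :=
  ∃ h' : ℝ → ℝ, ContinuousOn h (Icc 0 1) ∧ ContinuousOn h' (Icc 0 1) ∧
    MapsTo h (Icc 0 1) (Icc 0 1) ∧ MapsTo h' (Icc 0 1) (Icc 0 1) ∧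
    (∀ x ∈ Icc (0:ℝ) 1, h' (h x) = x) ∧ (∀ y ∈ Icc (0:ℝ) 1, h (h' y) = y)

/-!
Let `Ω` be the set of binary sequences each of whose shifts is lexicographically at most `α`
when it starts with `0` and at least `β` when it starts with `1`; it contains `β` and every
`T_q^-`-itinerary. Let `G(a)` be the infimum of `π_a` over the sequences of `Ω` starting with `1`
minus its supremum over those starting with `0`. If two sequences of `Ω` first differ at
position `k`, with `0 < 1` there, their `π_a`-values differ by at least `a^k G(a)`.

For `a < 1/2` the two cylinders have disjoint images, so `G(a) > 0`. For `c < a < 1`, with `c`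
a common contraction ratio, `G(a) ≤ 0`: points of `[0,1]` at distance `2cⁿ` have itineraries
differing within `n` symbols, so a grid of about `c⁻ⁿ/2` points would have `π_a`-values
increasing by `aⁿ G(a)` at each step, inside `[0,1]`. Since `G` is continuous, it vanishes at
some `a`; there `π_a` is monotone for the lexicographic order on `Ω`, and `α`, `β` are the
extremal elements of the two cylinders, so `π_a(α) = sup = inf = π_a(β)`.
-/

noncomputable def piTerm (a : ℝ) (ω : ℕ → Bool) (k : ℕ) : ℝ := cond (ω k) (a ^ k) 0

lemma piU_eq_tsum_piTerm (a : ℝ) (ω : ℕ → Bool) : piU a ω = (1 - a) * ∑' k, piTerm a ω k := rfl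

section UniformCoding

variable {a : ℝ}

lemma piTerm_nonneg (ha : 0 ≤ a) (ω : ℕ → Bool) (k : ℕ) : 0 ≤ piTerm a ω k := by
  cases h : ω k <;> simp [piTerm, h, pow_nonneg ha]

lemma piTerm_le (ha : 0 ≤ a) (ω : ℕ → Bool) (k : ℕ) : piTerm a ω k ≤ a ^ k := by
  cases h : ω k <;> simp [piTerm, h, pow_nonneg ha]

lemma summable_piTerm (ha : 0 ≤ a) (ha1 : a < 1) (ω : ℕ → Bool) : Summable (piTerm a ω) :=
  (summable_geometric_of_lt_one ha ha1).of_nonneg_of_le (piTerm_nonneg ha ω) (piTerm_le ha ω)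

lemma tsum_piTerm_le (ha : 0 ≤ a) (ha1 : a < 1) (ω : ℕ → Bool) :
    ∑' k, piTerm a ω k ≤ (1 - a)⁻¹ := by
  rw [← tsum_geometric_of_lt_one ha ha1]
  exact (summable_piTerm ha ha1 ω).tsum_le_tsum (piTerm_le ha ω)
    (summable_geometric_of_lt_one ha ha1)

lemma piU_nonneg (ha : 0 ≤ a) (ha1 : a < 1) (ω : ℕ → Bool) : 0 ≤ piU a ω :=
  mul_nonneg (by linarith) (tsum_nonneg (piTerm_nonneg ha ω))

lemma piU_le_one (ha : 0 ≤ a) (ha1 : a < 1) (ω : ℕ → Bool) : piU a ω ≤ 1 := by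
  have h := mul_le_mul_of_nonneg_left (tsum_piTerm_le ha ha1 ω) (sub_nonneg.2 ha1.le)
  rwa [mul_inv_cancel₀ (sub_ne_zero.2 ha1.ne')] at h

lemma piU_eq_sum_add_shiftn (ha : 0 ≤ a) (ha1 : a < 1) (ω : ℕ → Bool) (n : ℕ) :
    piU a ω = (1 - a) * ∑ i ∈ Finset.range n, piTerm a ω i + a ^ n * piU a (shiftn n ω) := by
  have htail : ∀ i, piTerm a ω (i + n) = a ^ n * piTerm a (shiftn n ω) i := fun i => by
    cases h : ω (i + n) <;> simp [piTerm, shiftn, h, pow_add, mul_comm]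
  rw [piU_eq_tsum_piTerm, piU_eq_tsum_piTerm,
    ← (summable_piTerm ha ha1 ω).sum_add_tsum_nat_add n, tsum_congr htail, tsum_mul_left]
  ring

lemma one_sub_le_piU (ha : 0 ≤ a) (ha1 : a < 1) {ω : ℕ → Bool} (h0 : ω 0 = true) :
    1 - a ≤ piU a ω := by
  have := piU_nonneg ha ha1 (shiftn 1 ω)
  rw [piU_eq_sum_add_shiftn ha ha1 ω 1]
  simp only [Finset.range_one, Finset.sum_singleton, piTerm, h0, cond_true, pow_zero, pow_one]
  nlinarith

lemma piU_le_self (ha : 0 ≤ a) (ha1 : a < 1) {ω : ℕ → Bool} (h0 : ω 0 = false) :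
    piU a ω ≤ a := by
  have := piU_le_one ha ha1 (shiftn 1 ω)
  rw [piU_eq_sum_add_shiftn ha ha1 ω 1]
  simp only [Finset.range_one, Finset.sum_singleton, piTerm, h0, cond_false, pow_one]
  nlinarith

lemma piU_sub_piU_of_prefix (ha : 0 ≤ a) (ha1 : a < 1) {ω ω' : ℕ → Bool} {n : ℕ}
    (hpre : ∀ j < n, ω j = ω' j) :
    piU a ω' - piU a ω = a ^ n * (piU a (shiftn n ω') - piU a (shiftn n ω)) := by
  have hsum : ∑ i ∈ Finset.range n, piTerm a ω i = ∑ i ∈ Finset.range n, piTerm a ω' i :=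
    Finset.sum_congr rfl fun i hi => by rw [piTerm, piTerm, hpre i (Finset.mem_range.1 hi)]
  rw [piU_eq_sum_add_shiftn ha ha1 ω n, piU_eq_sum_add_shiftn ha ha1 ω' n, hsum]
  ring

end UniformCoding

lemma summable_natCast_mul_pow_pred {r : ℝ} (hr0 : 0 ≤ r) (hr1 : r < 1) :
    Summable fun k : ℕ => (k : ℝ) * r ^ (k - 1) := by
  rw [← summable_nat_add_iff 1]
  have hr : ‖r‖ < 1 := by rwa [Real.norm_eq_abs, abs_of_nonneg hr0]
  refine ((summable_pow_mul_geometric_of_norm_lt_one 1 hr).add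
    (summable_geometric_of_lt_one hr0 hr1)).congr fun k => ?_
  simp only [pow_one, Nat.add_sub_cancel, Nat.cast_add, Nat.cast_one]
  ring

lemma abs_tsum_piTerm_sub_le {r : ℝ} (hr1 : r < 1) (ω : ℕ → Bool) {a b : ℝ}
    (ha : a ∈ Icc 0 r) (hb : b ∈ Icc 0 r) :
    |∑' k, piTerm a ω k - ∑' k, piTerm b ω k| ≤ (∑' k : ℕ, (k : ℝ) * r ^ (k - 1)) * |a - b| := by
  have hsa := summable_piTerm ha.1 (ha.2.trans_lt hr1) ω
  have hsb := summable_piTerm hb.1 (hb.2.trans_lt hr1) ω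
  have hr0 : 0 ≤ r := ha.1.trans ha.2
  have hsM := summable_natCast_mul_pow_pred hr0 hr1
  have hterm : ∀ k, |piTerm a ω k - piTerm b ω k| ≤ |a - b| * ((k : ℝ) * r ^ (k - 1)) := by
    intro k
    have hmax : max |a| |b| ≤ r := by
      rw [abs_of_nonneg ha.1, abs_of_nonneg hb.1]; exact max_le ha.2 hb.2
    cases h : ω k
    · simp only [piTerm, h, cond_false, sub_self, abs_zero]
      positivity
    · simp only [piTerm, h, cond_true]
      calc |a ^ k - b ^ k| ≤ |a - b| * k * max |a| |b| ^ (k - 1) := abs_pow_sub_pow_le a b k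
        _ ≤ |a - b| * ((k : ℝ) * r ^ (k - 1)) := by rw [← mul_assoc]; gcongr
  rw [← hsa.tsum_sub hsb, mul_comm, ← tsum_mul_left]
  calc |∑' k, (piTerm a ω k - piTerm b ω k)| ≤ ∑' k, |piTerm a ω k - piTerm b ω k| :=
        norm_tsum_le_tsum_norm (f := fun k => piTerm a ω k - piTerm b ω k) (hsa.sub hsb).norm
    _ ≤ ∑' k : ℕ, |a - b| * ((k : ℝ) * r ^ (k - 1)) :=
        (hsa.sub hsb).abs.tsum_le_tsum hterm (hsM.mul_left _)

lemma exists_lipschitzOnWith_piU {r : ℝ} (hr0 : 0 ≤ r) (hr1 : r < 1) :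
    ∃ K : NNReal, ∀ ω, LipschitzOnWith K (fun a => piU a ω) (Icc 0 r) := by
  set M := ∑' k : ℕ, (k : ℝ) * r ^ (k - 1)
  have hM : 0 ≤ M := tsum_nonneg fun k => by positivity
  have hr : 0 < 1 - r := sub_pos.2 hr1
  refine ⟨Real.toNNReal (M + (1 - r)⁻¹), fun ω => LipschitzOnWith.of_dist_le_mul
    fun a ha b hb => ?_⟩
  rw [Real.coe_toNNReal _ (by positivity), Real.dist_eq, Real.dist_eq, piU_eq_tsum_piTerm,
    piU_eq_tsum_piTerm]
  set Sa := ∑' k, piTerm a ω k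
  set Sb := ∑' k, piTerm b ω k
  have hSb0 : 0 ≤ Sb := tsum_nonneg (piTerm_nonneg hb.1 ω)
  have hSb1 : Sb ≤ (1 - r)⁻¹ := (tsum_piTerm_le hb.1 (hb.2.trans_lt hr1) ω).trans
    (inv_anti₀ hr (by linarith [hb.2]))
  have hdiff := abs_tsum_piTerm_sub_le hr1 ω ha hb
  calc |(1 - a) * Sa - (1 - b) * Sb| = |(1 - a) * (Sa - Sb) + (b - a) * Sb| := by ring_nf
    _ ≤ |Sa - Sb| + |a - b| * (1 - r)⁻¹ := by
      refine (abs_add_le _ _).trans (add_le_add ?_ ?_)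
      · rw [abs_mul, abs_of_nonneg (by linarith [ha.2] : 0 ≤ 1 - a)]
        exact mul_le_of_le_one_left (abs_nonneg _) (by linarith [ha.1])
      · rw [abs_mul, abs_sub_comm, abs_of_nonneg hSb0]
        exact mul_le_mul_of_nonneg_left hSb1 (abs_nonneg _)
    _ ≤ (M + (1 - r)⁻¹) * |a - b| := by nlinarith [abs_nonneg (a - b)]

lemma lipschitzOnWith_sSup_image {α ι : Type*} [PseudoMetricSpace α] {F : α → ι → ℝ}
    {S : Set ι} {T : Set α} {K : NNReal} (hS : S.Nonempty) (hbdd : ∀ a ∈ T, BddAbove (F a '' S))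
    (hF : ∀ i ∈ S, LipschitzOnWith K (fun a => F a i) T) :
    LipschitzOnWith K (fun a => sSup (F a '' S)) T := by
  have key : ∀ a ∈ T, ∀ b ∈ T, sSup (F a '' S) ≤ sSup (F b '' S) + K * dist a b := by
    intro a ha b hb
    refine csSup_le (hS.image _) (forall_mem_image.2 fun i hi => ?_)
    have hab := (hF i hi).dist_le_mul a ha b hb
    have hle := le_csSup (hbdd b hb) (mem_image_of_mem _ hi)
    rw [Real.dist_eq] at hab
    linarith [le_abs_self (F a i - F b i)]
  refine LipschitzOnWith.of_dist_le_mul fun a ha b hb => ?_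
  have hba := key b hb a ha
  rw [dist_comm] at hba
  rw [Real.dist_eq, abs_sub_le_iff]
  constructor <;> linarith [key a ha b hb]

lemma lipschitzOnWith_sInf_image {α ι : Type*} [PseudoMetricSpace α] {F : α → ι → ℝ}
    {S : Set ι} {T : Set α} {K : NNReal} (hS : S.Nonempty) (hbdd : ∀ a ∈ T, BddBelow (F a '' S))
    (hF : ∀ i ∈ S, LipschitzOnWith K (fun a => F a i) T) :
    LipschitzOnWith K (fun a => sInf (F a '' S)) T := by
  have key : ∀ a ∈ T, ∀ b ∈ T, sInf (F a '' S) ≤ sInf (F b '' S) + K * dist a b := by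
    intro a ha b hb
    rw [← sub_le_iff_le_add]
    refine le_csInf (hS.image _) (forall_mem_image.2 fun i hi => ?_)
    have hab := (hF i hi).dist_le_mul a ha b hb
    have hle := csInf_le (hbdd a ha) (mem_image_of_mem _ hi)
    rw [Real.dist_eq] at hab
    linarith [le_abs_self (F a i - F b i)]
  refine LipschitzOnWith.of_dist_le_mul fun a ha b hb => ?_
  have hba := key b hb a ha
  rw [dist_comm] at hba
  rw [Real.dist_eq, abs_sub_le_iff]
  constructor <;> linarith [key a ha b hb]

lemma lexLe_of_forall_prefix {σ ω : ℕ → Bool} (h : ∀ k, (∀ j < k, σ j = ω j) → σ k ≤ ω k) :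
    lexLe σ ω := by
  classical
  by_cases heq : σ = ω
  · exact Or.inr heq
  have hex : ∃ k, σ k ≠ ω k := Function.ne_iff.1 heq
  have hmin : ∀ j < Nat.find hex, σ j = ω j := fun j hj => not_not.1 (Nat.find_min hex hj)
  exact Or.inl ⟨_, hmin, (h _ hmin).lt_of_ne (Nat.find_spec hex)⟩

@[simp] lemma shiftn_zero (ω : ℕ → Bool) : shiftn 0 ω = ω := rfl

lemma shiftn_shiftn (m n : ℕ) (ω : ℕ → Bool) : shiftn m (shiftn n ω) = shiftn (m + n) ω := by
  funext k; simp only [shiftn, Nat.add_assoc]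

def admissible (α β : ℕ → Bool) : Set (ℕ → Bool) :=
  {ω | ∀ n, (ω n = false → lexLe (shiftn n ω) α) ∧ (ω n = true → lexLe β (shiftn n ω))}

def admissibleCyl (α β : ℕ → Bool) (b : Bool) : Set (ℕ → Bool) :=
  {ω | ω ∈ admissible α β ∧ ω 0 = b}

noncomputable def admissibleGap (α β : ℕ → Bool) (a : ℝ) : ℝ :=
  sInf (piU a '' admissibleCyl α β true) - sSup (piU a '' admissibleCyl α β false)

section Admissible

variable {α β : ℕ → Bool} {a : ℝ}

lemma shiftn_mem_admissible {ω : ℕ → Bool} (hω : ω ∈ admissible α β) (n : ℕ) :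
    shiftn n ω ∈ admissible α β := fun m => by
  rw [shiftn_shiftn]; exact hω (m + n)

lemma bddAbove_image_piU (ha : 0 ≤ a) (ha1 : a < 1) (s : Set (ℕ → Bool)) :
    BddAbove (piU a '' s) :=
  ⟨1, forall_mem_image.2 fun ω _ => piU_le_one ha ha1 ω⟩

lemma bddBelow_image_piU (ha : 0 ≤ a) (ha1 : a < 1) (s : Set (ℕ → Bool)) :
    BddBelow (piU a '' s) :=
  ⟨0, forall_mem_image.2 fun ω _ => piU_nonneg ha ha1 ω⟩

lemma pow_mul_admissibleGap_le (ha : 0 ≤ a) (ha1 : a < 1) {ω ω' : ℕ → Bool}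
    (hω : ω ∈ admissible α β) (hω' : ω' ∈ admissible α β) {k : ℕ}
    (hpre : ∀ j < k, ω j = ω' j) (hk : ω k < ω' k) :
    a ^ k * admissibleGap α β a ≤ piU a ω' - piU a ω := by
  obtain ⟨hk0, hk1⟩ := Bool.lt_iff.1 hk
  rw [piU_sub_piU_of_prefix ha ha1 hpre]
  refine mul_le_mul_of_nonneg_left ?_ (pow_nonneg ha k)
  have h1 : sInf (piU a '' admissibleCyl α β true) ≤ piU a (shiftn k ω') :=
    csInf_le (bddBelow_image_piU ha ha1 _)
      ⟨_, ⟨shiftn_mem_admissible hω' k, by simpa [shiftn] using hk1⟩, rfl⟩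
  have h0 : piU a (shiftn k ω) ≤ sSup (piU a '' admissibleCyl α β false) :=
    le_csSup (bddAbove_image_piU ha ha1 _)
      ⟨_, ⟨shiftn_mem_admissible hω k, by simpa [shiftn] using hk0⟩, rfl⟩
  rw [admissibleGap]
  linarith

lemma one_sub_two_mul_le_admissibleGap (ha : 0 ≤ a) (ha1 : a < 1)
    (h0 : (admissibleCyl α β false).Nonempty) (h1 : (admissibleCyl α β true).Nonempty) :
    1 - 2 * a ≤ admissibleGap α β a := by
  have hinf : 1 - a ≤ sInf (piU a '' admissibleCyl α β true) :=
    le_csInf (h1.image _) (forall_mem_image.2 fun ω hω => one_sub_le_piU ha ha1 hω.2)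
  have hsup : sSup (piU a '' admissibleCyl α β false) ≤ a :=
    csSup_le (h0.image _) (forall_mem_image.2 fun ω hω => piU_le_self ha ha1 hω.2)
  rw [admissibleGap]
  linarith

lemma continuousOn_admissibleGap {r : ℝ} (hr0 : 0 ≤ r) (hr1 : r < 1)
    (h0 : (admissibleCyl α β false).Nonempty) (h1 : (admissibleCyl α β true).Nonempty) :
    ContinuousOn (admissibleGap α β) (Icc 0 r) := by
  obtain ⟨K, hK⟩ := exists_lipschitzOnWith_piU hr0 hr1
  have hlt : ∀ a ∈ Icc 0 r, a < 1 := fun a ha => ha.2.trans_lt hr1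
  exact (lipschitzOnWith_sInf_image h1 (fun a ha => bddBelow_image_piU ha.1 (hlt a ha) _)
    fun ω _ => hK ω).continuousOn.sub
    (lipschitzOnWith_sSup_image h0 (fun a ha => bddAbove_image_piU ha.1 (hlt a ha) _)
    fun ω _ => hK ω).continuousOn

lemma piU_le_piU_of_lexLe (ha : 0 ≤ a) (ha1 : a < 1) (hgap : admissibleGap α β a = 0)
    {ω ω' : ℕ → Bool} (hω : ω ∈ admissible α β) (hω' : ω' ∈ admissible α β)
    (h : lexLe ω ω') : piU a ω ≤ piU a ω' := by
  rcases h with ⟨k, hpre, hk⟩ | rfl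
  · have := pow_mul_admissibleGap_le ha ha1 hω hω' hpre hk
    rw [hgap, mul_zero] at this
    linarith
  · exact le_rfl

lemma piU_eq_of_admissibleGap_eq_zero (ha : 0 ≤ a) (ha1 : a < 1)
    (hα : α ∈ admissible α β) (hα0 : α 0 = false) (hβ : β ∈ admissible α β) (hβ0 : β 0 = true)
    (hgap : admissibleGap α β a = 0) : piU a α = piU a β := by
  have hmax : IsGreatest (piU a '' admissibleCyl α β false) (piU a α) :=
    ⟨⟨α, ⟨hα, hα0⟩, rfl⟩, forall_mem_image.2 fun ω hω =>
      piU_le_piU_of_lexLe ha ha1 hgap hω.1 hα (by simpa using (hω.1 0).1 hω.2)⟩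
  have hmin : IsLeast (piU a '' admissibleCyl α β true) (piU a β) :=
    ⟨⟨β, ⟨hβ, hβ0⟩, rfl⟩, forall_mem_image.2 fun ω hω =>
      piU_le_piU_of_lexLe ha ha1 hgap hβ hω.1 (by simpa using (hω.1 0).2 hω.2)⟩
  rw [admissibleGap, hmax.csSup_eq, hmin.csInf_eq] at hgap
  linarith

end Admissible

lemma natCast_mul_le_one_of_add_le {φ : ℝ → ℝ} {δ ε : ℝ} {m : ℕ}
    (hφ : MapsTo φ (Icc 0 1) (Icc 0 1)) (hδ : 0 ≤ δ) (hm : m * δ ≤ 1)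
    (h : ∀ x ∈ Icc (0:ℝ) 1, ∀ y ∈ Icc (0:ℝ) 1, x + δ ≤ y → φ x + ε ≤ φ y) : m * ε ≤ 1 := by
  have hgrid : ∀ i ≤ m, (i : ℝ) * δ ∈ Icc (0:ℝ) 1 := fun i hi =>
    ⟨by positivity, (mul_le_mul_of_nonneg_right (by exact_mod_cast hi) hδ).trans hm⟩
  have key : ∀ i ≤ m, φ 0 + i * ε ≤ φ (i * δ) := by
    intro i
    induction i with
    | zero => intro _; simp
    | succ i ih =>
      intro hi
      have hstep := h _ (hgrid i (by omega)) _ (hgrid (i + 1) hi) (by push_cast; linarith)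
      push_cast at hstep ⊢
      linarith [ih (by omega)]
  linarith [key m le_rfl, (hφ ⟨le_rfl, zero_le_one⟩).1, (hφ (hgrid m le_rfl)).2]

lemma exists_one_lt_natFloor_mul {c a Δ : ℝ} (hc : 0 < c) (hca : c < a) (ha1 : a ≤ 1)
    (hΔ : 0 < Δ) : ∃ n : ℕ, 1 < ⌊(2 * c ^ n)⁻¹⌋₊ * (a ^ n * Δ) := by
  obtain ⟨n, hn⟩ := pow_unbounded_of_one_lt (2 * (1 + Δ) / Δ) ((one_lt_div hc).2 hca)
  refine ⟨n, ?_⟩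
  have hcn : 0 < c ^ n := pow_pos hc n
  have han : a ^ n ≤ 1 := pow_le_one₀ (hc.trans hca).le ha1
  have hpos : 0 < a ^ n * Δ := mul_pos (pow_pos (hc.trans hca) n) hΔ
  have hbig : 1 + Δ < (2 * c ^ n)⁻¹ * (a ^ n * Δ) := by
    rw [div_pow, div_lt_div_iff₀ hΔ hcn] at hn
    rw [← div_eq_inv_mul, lt_div_iff₀ (by positivity)]
    linarith
  calc 1 < ((2 * c ^ n)⁻¹ - 1) * (a ^ n * Δ) := by nlinarith
    _ ≤ ⌊(2 * c ^ n)⁻¹⌋₊ * (a ^ n * Δ) := by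
      gcongr
      linarith [Nat.lt_floor_add_one (2 * c ^ n)⁻¹]

def LexSeparates (c : ℝ) (φ : ℝ → ℕ → Bool) : Prop :=
  ∀ x ∈ Icc (0:ℝ) 1, ∀ y ∈ Icc (0:ℝ) 1, ∀ n : ℕ, c ^ n < y - x →
    ∃ k < n, (∀ j < k, φ x j = φ y j) ∧ φ x k < φ y k

section LexSeparates

variable {α β : ℕ → Bool} {c : ℝ}

lemma admissibleGap_nonpos_of_lexSeparates {a : ℝ} (hc : 0 < c) (hca : c < a) (ha1 : a < 1)
    {φ : ℝ → ℕ → Bool} (hφ : ∀ x ∈ Icc (0:ℝ) 1, φ x ∈ admissible α β)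
    (hexp : LexSeparates c φ) :
    admissibleGap α β a ≤ 0 := by
  by_contra! hΔ
  have ha : 0 ≤ a := hc.le.trans hca.le
  obtain ⟨n, hn⟩ := exists_one_lt_natFloor_mul hc hca ha1.le hΔ
  have hcn : 0 < c ^ n := pow_pos hc n
  have hmaps : MapsTo (fun x => piU a (φ x)) (Icc 0 1) (Icc 0 1) := fun x _ =>
    ⟨piU_nonneg ha ha1 _, piU_le_one ha ha1 _⟩
  have hgrid : (⌊(2 * c ^ n)⁻¹⌋₊ : ℝ) * (2 * c ^ n) ≤ 1 := by
    calc (⌊(2 * c ^ n)⁻¹⌋₊ : ℝ) * (2 * c ^ n) ≤ (2 * c ^ n)⁻¹ * (2 * c ^ n) := by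
          gcongr; exact Nat.floor_le (by positivity)
      _ = 1 := inv_mul_cancel₀ (by positivity)
  have hstep : ∀ x ∈ Icc (0:ℝ) 1, ∀ y ∈ Icc (0:ℝ) 1, x + 2 * c ^ n ≤ y →
      piU a (φ x) + a ^ n * admissibleGap α β a ≤ piU a (φ y) := by
    intro x hx y hy hxy
    obtain ⟨k, hkn, hpre, hk⟩ := hexp x hx y hy n (by linarith)
    have hgap := pow_mul_admissibleGap_le ha ha1 (hφ x hx) (hφ y hy) hpre hk
    have hnk : a ^ n ≤ a ^ k := pow_le_pow_of_le_one ha ha1.le hkn.le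
    nlinarith
  linarith [natCast_mul_le_one_of_add_le hmaps (by positivity) hgrid hstep]

theorem exists_piU_eq_piU_of_lexSeparates (hc0 : 0 < c) (hc1 : c < 1)
    (hα : α ∈ admissible α β) (hα0 : α 0 = false) (hβ : β ∈ admissible α β) (hβ0 : β 0 = true)
    {φ : ℝ → ℕ → Bool} (hφ : ∀ x ∈ Icc (0:ℝ) 1, φ x ∈ admissible α β)
    (hexp : LexSeparates c φ) :
    ∃ a : ℝ, 0 < a ∧ a < 1 ∧ piU a α = piU a β := by
  obtain ⟨r, hcr, hr1⟩ := exists_between hc1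
  have hr0 : 0 < r := hc0.trans hcr
  have h0 : (admissibleCyl α β false).Nonempty := ⟨α, hα, hα0⟩
  have h1 : (admissibleCyl α β true).Nonempty := ⟨β, hβ, hβ0⟩
  have hneg : admissibleGap α β r ≤ 0 :=
    admissibleGap_nonpos_of_lexSeparates hc0 hcr hr1 hφ hexp
  have hpos : 0 < admissibleGap α β (r / 2) := by
    linarith [one_sub_two_mul_le_admissibleGap (by positivity) (by linarith) h0 h1 (a := r / 2)]
  obtain ⟨a, ha, hzero⟩ := intermediate_value_Icc' (by linarith)
    ((continuousOn_admissibleGap hr0.le hr1 h0 h1).mono (Icc_subset_Icc (by positivity) le_rfl))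
    ⟨hneg, hpos.le⟩
  have ha0 : 0 < a := by linarith [ha.1]
  have ha1 : a < 1 := by linarith [ha.2]
  exact ⟨a, ha0, ha1, piU_eq_of_admissibleGap_eq_zero ha0.le ha1 hα hα0 hβ hβ0 hzero⟩

end LexSeparates

section InverseBranch

variable {f g : ℝ → ℝ} {c : ℝ}

lemma mapsTo_of_leftInvOn (hf : ContinuousOn f (Icc 0 1)) (hg : LeftInvOn g f (Icc 0 1)) :
    MapsTo g (Icc (f 0) (f 1)) (Icc 0 1) := by
  intro u hu
  obtain ⟨x, hx, rfl⟩ := intermediate_value_Icc zero_le_one hf hu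
  rwa [hg hx]

lemma sub_le_mul_sub_of_leftInvOn (hm : StrictMonoOn f (Icc 0 1))
    (hf : ContinuousOn f (Icc 0 1))
    (hlip : ∀ x ∈ Icc (0:ℝ) 1, ∀ y ∈ Icc (0:ℝ) 1, |f x - f y| ≤ c * |x - y|)
    (hg : LeftInvOn g f (Icc 0 1)) {u v : ℝ} (hu : u ∈ Icc (f 0) (f 1))
    (hv : v ∈ Icc (f 0) (f 1)) (huv : u ≤ v) : v - u ≤ c * (g v - g u) := by
  obtain ⟨x, hx, rfl⟩ := intermediate_value_Icc zero_le_one hf hu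
  obtain ⟨y, hy, rfl⟩ := intermediate_value_Icc zero_le_one hf hv
  have hxy : x ≤ y := (hm.le_iff_le hx hy).1 huv
  have h := hlip y hy x hx
  rw [abs_of_nonneg (sub_nonneg.2 huv), abs_of_nonneg (sub_nonneg.2 hxy)] at h
  rwa [hg hx, hg hy]

end InverseBranch

structure OverlappingIFS (f0 f1 g0 g1 : ℝ → ℝ) (q c : ℝ) : Prop where
  strictMonoOn_f0 : StrictMonoOn f0 (Icc 0 1)
  strictMonoOn_f1 : StrictMonoOn f1 (Icc 0 1)
  continuousOn_f0 : ContinuousOn f0 (Icc 0 1)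
  continuousOn_f1 : ContinuousOn f1 (Icc 0 1)
  contract_f0 : ∀ x ∈ Icc (0:ℝ) 1, ∀ y ∈ Icc (0:ℝ) 1, |f0 x - f0 y| ≤ c * |x - y|
  contract_f1 : ∀ x ∈ Icc (0:ℝ) 1, ∀ y ∈ Icc (0:ℝ) 1, |f1 x - f1 y| ≤ c * |x - y|
  c_pos : 0 < c
  f0_zero : f0 0 = 0
  f1_one : f1 1 = 1
  f1_zero_pos : 0 < f1 0
  f0_one_lt : f0 1 < 1
  q_mem : q ∈ Ioo (f1 0) (f0 1)
  leftInvOn_g0 : LeftInvOn g0 f0 (Icc 0 1)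
  leftInvOn_g1 : LeftInvOn g1 f1 (Icc 0 1)

/-- `T_q^-` and `T_q^+` are the `branchMap`s of the cuts `decide (q < ·)` and `decide (q ≤ ·)`;
comparing orbits of two arbitrary cuts handles all the mixed comparisons at once. -/
def IsCut (q : ℝ) (s : ℝ → Bool) : Prop :=
  ∀ x, (s x = false → x ≤ q) ∧ (s x = true → q ≤ x)

def branchMap (g0 g1 : ℝ → ℝ) (s : ℝ → Bool) (x : ℝ) : ℝ := cond (s x) g1 g0 x

def branchItin (g0 g1 : ℝ → ℝ) (s : ℝ → Bool) (x : ℝ) : ℕ → Bool :=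
  fun n => s ((branchMap g0 g1 s)^[n] x)

lemma isCut_lt (q : ℝ) : IsCut q fun x => decide (q < x) :=
  fun x => ⟨fun h => by simpa using h, fun h => (of_decide_eq_true h).le⟩

lemma isCut_le (q : ℝ) : IsCut q fun x => decide (q ≤ x) :=
  fun x => ⟨fun h => by simpa using (not_le.1 (of_decide_eq_false h)).le, of_decide_eq_true⟩

lemma tauMinus_eq_branchItin (g0 g1 : ℝ → ℝ) (q : ℝ) :
    tauMinus g0 g1 q = branchItin g0 g1 fun x => decide (q < x) := by
  have hT : Tminus g0 g1 q = branchMap g0 g1 fun x => decide (q < x) := by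
    funext x
    by_cases h : q < x <;> simp [Tminus, branchMap, h, not_le.2, le_of_not_gt]
  funext x n
  simp [tauMinus, branchItin, hT]

lemma tauPlus_eq_branchItin (g0 g1 : ℝ → ℝ) (q : ℝ) :
    tauPlus g0 g1 q = branchItin g0 g1 fun x => decide (q ≤ x) := by
  have hT : Tplus g0 g1 q = branchMap g0 g1 fun x => decide (q ≤ x) := by
    funext x
    by_cases h : q ≤ x <;> simp [Tplus, branchMap, h, not_lt.2, lt_of_not_ge]
  funext x n
  simp [tauPlus, branchItin, hT]

lemma shiftn_branchItin (g0 g1 : ℝ → ℝ) (s : ℝ → Bool) (x : ℝ) (n : ℕ) :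
    shiftn n (branchItin g0 g1 s x) = branchItin g0 g1 s ((branchMap g0 g1 s)^[n] x) := by
  funext k
  simp only [shiftn, branchItin, Function.iterate_add_apply]

namespace OverlappingIFS

variable {f0 f1 g0 g1 : ℝ → ℝ} {q c : ℝ} {s s' : ℝ → Bool} {x y : ℝ}

lemma q_mem_Icc (H : OverlappingIFS f0 f1 g0 g1 q c) : q ∈ Icc (0:ℝ) 1 :=
  ⟨(H.f1_zero_pos.trans H.q_mem.1).le, (H.q_mem.2.trans H.f0_one_lt).le⟩

lemma mem_Icc_f0 (H : OverlappingIFS f0 f1 g0 g1 q c) (hx : x ∈ Icc (0:ℝ) 1) (hxq : x ≤ q) :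
    x ∈ Icc (f0 0) (f0 1) :=
  ⟨H.f0_zero.symm ▸ hx.1, hxq.trans H.q_mem.2.le⟩

lemma mem_Icc_f1 (H : OverlappingIFS f0 f1 g0 g1 q c) (hx : x ∈ Icc (0:ℝ) 1) (hqx : q ≤ x) :
    x ∈ Icc (f1 0) (f1 1) :=
  ⟨H.q_mem.1.le.trans hqx, H.f1_one.symm ▸ hx.2⟩

lemma branch_mem (H : OverlappingIFS f0 f1 g0 g1 q c) {b : Bool} (hx : x ∈ Icc (0:ℝ) 1)
    (h0 : b = false → x ≤ q) (h1 : b = true → q ≤ x) : cond b g1 g0 x ∈ Icc (0:ℝ) 1 := by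
  cases b
  · exact mapsTo_of_leftInvOn H.continuousOn_f0 H.leftInvOn_g0 (H.mem_Icc_f0 hx (h0 rfl))
  · exact mapsTo_of_leftInvOn H.continuousOn_f1 H.leftInvOn_g1 (H.mem_Icc_f1 hx (h1 rfl))

lemma sub_le_mul_branch_sub (H : OverlappingIFS f0 f1 g0 g1 q c) {b : Bool}
    (hx : x ∈ Icc (0:ℝ) 1) (hy : y ∈ Icc (0:ℝ) 1) (hxy : x ≤ y)
    (h0 : b = false → y ≤ q) (h1 : b = true → q ≤ x) :
    y - x ≤ c * (cond b g1 g0 y - cond b g1 g0 x) := by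
  cases b
  · exact sub_le_mul_sub_of_leftInvOn H.strictMonoOn_f0 H.continuousOn_f0 H.contract_f0
      H.leftInvOn_g0 (H.mem_Icc_f0 hx (hxy.trans (h0 rfl))) (H.mem_Icc_f0 hy (h0 rfl)) hxy
  · exact sub_le_mul_sub_of_leftInvOn H.strictMonoOn_f1 H.continuousOn_f1 H.contract_f1
      H.leftInvOn_g1 (H.mem_Icc_f1 hx (h1 rfl)) (H.mem_Icc_f1 hy ((h1 rfl).trans hxy)) hxy

lemma iterate_branchMap_mem (H : OverlappingIFS f0 f1 g0 g1 q c) (hs : IsCut q s)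
    (hx : x ∈ Icc (0:ℝ) 1) (n : ℕ) : (branchMap g0 g1 s)^[n] x ∈ Icc (0:ℝ) 1 := by
  induction n with
  | zero => exact hx
  | succ n ih =>
    rw [Function.iterate_succ_apply']
    exact H.branch_mem ih (hs _).1 (hs _).2

lemma sub_le_pow_mul_of_prefix (H : OverlappingIFS f0 f1 g0 g1 q c) (hs : IsCut q s)
    (hs' : IsCut q s') (hx : x ∈ Icc (0:ℝ) 1) (hy : y ∈ Icc (0:ℝ) 1) (hxy : x ≤ y) (n : ℕ)
    (hpre : ∀ i < n, branchItin g0 g1 s x i = branchItin g0 g1 s' y i) :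
    y - x ≤ c ^ n * ((branchMap g0 g1 s')^[n] y - (branchMap g0 g1 s)^[n] x) := by
  induction n with
  | zero => simp
  | succ n ih =>
    have hIH := ih fun i hi => hpre i (by omega)
    set u := (branchMap g0 g1 s)^[n] x
    set v := (branchMap g0 g1 s')^[n] y
    have huv : u ≤ v := sub_nonneg.1 <| (mul_nonneg_iff_of_pos_left (pow_pos H.c_pos n)).1 <|
      (sub_nonneg.2 hxy).trans hIH
    have hdigit : s u = s' v := hpre n (Nat.lt_succ_self n)
    have hstep := H.sub_le_mul_branch_sub (b := s u) (H.iterate_branchMap_mem hs hx n)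
      (H.iterate_branchMap_mem hs' hy n) huv (fun h => (hs' v).1 (hdigit ▸ h)) (hs u).2
    rw [Function.iterate_succ_apply', Function.iterate_succ_apply', branchMap, branchMap,
      ← hdigit, pow_succ, mul_assoc]
    exact hIH.trans (mul_le_mul_of_nonneg_left hstep (pow_pos H.c_pos n).le)

lemma sub_le_pow_of_prefix (H : OverlappingIFS f0 f1 g0 g1 q c) (hs : IsCut q s)
    (hs' : IsCut q s') (hx : x ∈ Icc (0:ℝ) 1) (hy : y ∈ Icc (0:ℝ) 1) (hxy : x ≤ y) (n : ℕ)
    (hpre : ∀ i < n, branchItin g0 g1 s x i = branchItin g0 g1 s' y i) : y - x ≤ c ^ n := by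
  have hu := H.iterate_branchMap_mem hs hx n
  have hv := H.iterate_branchMap_mem hs' hy n
  refine (H.sub_le_pow_mul_of_prefix hs hs' hx hy hxy n hpre).trans ?_
  exact mul_le_of_le_one_right (pow_pos H.c_pos n).le (by linarith [hu.1, hv.2])

lemma lexLe_branchItin_of_lt (H : OverlappingIFS f0 f1 g0 g1 q c) (hs : IsCut q s)
    (hs' : IsCut q s') (hx : x ∈ Icc (0:ℝ) 1) (hy : y ∈ Icc (0:ℝ) 1) (hxy : x < y) :
    lexLe (branchItin g0 g1 s x) (branchItin g0 g1 s' y) := by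
  refine lexLe_of_forall_prefix fun k hpre => ?_
  have hexp := H.sub_le_pow_mul_of_prefix hs hs' hx hy hxy.le k hpre
  set u := (branchMap g0 g1 s)^[k] x
  set v := (branchMap g0 g1 s')^[k] y
  have huv : u < v := sub_pos.1 <| (mul_pos_iff_of_pos_left (pow_pos H.c_pos k)).1 <|
    (sub_pos.2 hxy).trans_le hexp
  show s u ≤ s' v
  cases hu : s u
  · exact Bool.false_le _
  cases hv : s' v
  · linarith [(hs u).2 hu, (hs' v).1 hv]
  · exact le_rfl

lemma lexLe_branchItin_of_le (H : OverlappingIFS f0 f1 g0 g1 q c) (hs : IsCut q s)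
    (hx : x ∈ Icc (0:ℝ) 1) (hy : y ∈ Icc (0:ℝ) 1) (hxy : x ≤ y) :
    lexLe (branchItin g0 g1 s x) (branchItin g0 g1 s y) := by
  rcases hxy.lt_or_eq with h | rfl
  · exact H.lexLe_branchItin_of_lt hs hs hx hy h
  · exact Or.inr rfl

lemma lexSeparates_branchItin (H : OverlappingIFS f0 f1 g0 g1 q c) (hs : IsCut q s) :
    LexSeparates c (branchItin g0 g1 s) := by
  intro x hx y hy n h
  have hxy : x < y := by linarith [pow_pos H.c_pos n]
  rcases H.lexLe_branchItin_of_lt hs hs hx hy hxy with ⟨k, hpre, hk⟩ | heq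
  · refine ⟨k, ?_, hpre, hk⟩
    by_contra! hnk
    linarith [H.sub_le_pow_of_prefix hs hs hx hy hxy.le n fun i hi => hpre i (hi.trans_le hnk)]
  · linarith [H.sub_le_pow_of_prefix hs hs hx hy hxy.le n fun i _ => congrFun heq i]

lemma branchItin_lt_mem_admissible (H : OverlappingIFS f0 f1 g0 g1 q c)
    (hx : x ∈ Icc (0:ℝ) 1) :
    branchItin g0 g1 (fun z => decide (q < z)) x ∈
      admissible (branchItin g0 g1 (fun z => decide (q < z)) q)
        (branchItin g0 g1 (fun z => decide (q ≤ z)) q) := by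
  intro n
  rw [shiftn_branchItin]
  have hz := H.iterate_branchMap_mem (isCut_lt q) hx n
  refine ⟨fun h => H.lexLe_branchItin_of_le (isCut_lt q) hz H.q_mem_Icc ?_,
    fun h => H.lexLe_branchItin_of_lt (isCut_le q) (isCut_lt q) H.q_mem_Icc hz ?_⟩
  · simpa [branchItin] using h
  · simpa [branchItin] using h

lemma branchItin_le_self_mem_admissible (H : OverlappingIFS f0 f1 g0 g1 q c) :
    branchItin g0 g1 (fun z => decide (q ≤ z)) q ∈
      admissible (branchItin g0 g1 (fun z => decide (q < z)) q)
        (branchItin g0 g1 (fun z => decide (q ≤ z)) q) := by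
  intro n
  rw [shiftn_branchItin]
  have hz := H.iterate_branchMap_mem (isCut_le q) H.q_mem_Icc n
  refine ⟨fun h => H.lexLe_branchItin_of_lt (isCut_le q) (isCut_lt q) hz H.q_mem_Icc ?_,
    fun h => H.lexLe_branchItin_of_le (isCut_le q) H.q_mem_Icc hz ?_⟩
  · simpa [branchItin] using h
  · simpa [branchItin] using h

end OverlappingIFS

theorem stmt16_general
    (f0 f1 g0 g1 : ℝ → ℝ) (q : ℝ)
    (hf0m : StrictMonoOn f0 (Icc 0 1)) (hf1m : StrictMonoOn f1 (Icc 0 1))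
    (hf0c : ContinuousOn f0 (Icc 0 1)) (hf1c : ContinuousOn f1 (Icc 0 1))
    (hf0lip : ∃ c, 0 ≤ c ∧ c < 1 ∧ ∀ x ∈ Icc (0:ℝ) 1, ∀ y ∈ Icc (0:ℝ) 1, |f0 x - f0 y| ≤ c * |x - y|)
    (hf1lip : ∃ c, 0 ≤ c ∧ c < 1 ∧ ∀ x ∈ Icc (0:ℝ) 1, ∀ y ∈ Icc (0:ℝ) 1, |f1 x - f1 y| ≤ c * |x - y|)
    (hf00 : f0 0 = 0) (hf11 : f1 1 = 1)
    (hf10pos : 0 < f1 0) (hf01lt : f0 1 < 1)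
    (hq : q ∈ Ioo (f1 0) (f0 1))
    (hg0 : ∀ x ∈ Icc (0:ℝ) 1, g0 (f0 x) = x) (hg1 : ∀ x ∈ Icc (0:ℝ) 1, g1 (f1 x) = x) :
    ∃ a : ℝ, 0 < a ∧ a < 1 ∧
      piU a (tauMinus g0 g1 q q) = piU a (tauPlus g0 g1 q q) := by
  obtain ⟨c0, -, hc0, hlip0⟩ := hf0lip
  obtain ⟨c1, -, hc1, hlip1⟩ := hf1lip
  have hc : max (max c0 c1) (1 / 2) < 1 := max_lt (max_lt hc0 hc1) (by norm_num)
  have H : OverlappingIFS f0 f1 g0 g1 q (max (max c0 c1) (1 / 2)) :=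
    { strictMonoOn_f0 := hf0m, strictMonoOn_f1 := hf1m,
      continuousOn_f0 := hf0c, continuousOn_f1 := hf1c,
      contract_f0 := fun x hx y hy => (hlip0 x hx y hy).trans <|
        mul_le_mul_of_nonneg_right (le_max_of_le_left (le_max_left _ _)) (abs_nonneg _)
      contract_f1 := fun x hx y hy => (hlip1 x hx y hy).trans <|
        mul_le_mul_of_nonneg_right (le_max_of_le_left (le_max_right _ _)) (abs_nonneg _)
      c_pos := lt_max_of_lt_right one_half_pos
      f0_zero := hf00, f1_one := hf11, f1_zero_pos := hf10pos, f0_one_lt := hf01lt,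
      q_mem := hq, leftInvOn_g0 := hg0, leftInvOn_g1 := hg1 }
  rw [tauMinus_eq_branchItin, tauPlus_eq_branchItin]
  exact exists_piU_eq_piU_of_lexSeparates H.c_pos hc (H.branchItin_lt_mem_admissible H.q_mem_Icc)
    (by simp [branchItin]) H.branchItin_le_self_mem_admissible (by simp [branchItin])
    (fun _ => H.branchItin_lt_mem_admissible)
    (H.lexSeparates_branchItin (isCut_lt q))

/-- For every overlapping IFS there exists `a ∈ (0,1)` with `π_a(α) = π_a(β)`. -/
theorem stmt16
    (f0 f1 g0 g1 : ℝ → ℝ) (q : ℝ)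
    (hf0m : StrictMonoOn f0 (Icc 0 1)) (hf1m : StrictMonoOn f1 (Icc 0 1))
    (hf0c : ContinuousOn f0 (Icc 0 1)) (hf1c : ContinuousOn f1 (Icc 0 1))
    (hf0map : MapsTo f0 (Icc 0 1) (Icc 0 1)) (hf1map : MapsTo f1 (Icc 0 1) (Icc 0 1))
    (hf0lip : ∃ c, 0 ≤ c ∧ c < 1 ∧ ∀ x ∈ Icc (0:ℝ) 1, ∀ y ∈ Icc (0:ℝ) 1, |f0 x - f0 y| ≤ c * |x - y|)
    (hf1lip : ∃ c, 0 ≤ c ∧ c < 1 ∧ ∀ x ∈ Icc (0:ℝ) 1, ∀ y ∈ Icc (0:ℝ) 1, |f1 x - f1 y| ≤ c * |x - y|)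
    (hf00 : f0 0 = 0) (hf11 : f1 1 = 1)
    (hf10pos : 0 < f1 0) (hoverf0f1 : f1 0 < f0 1) (hf01lt : f0 1 < 1)
    (hq : q ∈ Ioo (f1 0) (f0 1))
    (hg0 : ∀ x ∈ Icc (0:ℝ) 1, g0 (f0 x) = x) (hg1 : ∀ x ∈ Icc (0:ℝ) 1, g1 (f1 x) = x) :
    ∃ a : ℝ, 0 < a ∧ a < 1 ∧
      piU a (tauMinus g0 g1 q q) = piU a (tauPlus g0 g1 q q) :=
  stmt16_general f0 f1 g0 g1 q hf0m hf1m hf0c hf1c hf0lip hf1lip hf00 hf11 hf10pos hf01lt hq hg0 hg1
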